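/- arXiv:2308.01718 — 5 statements merged into one kernel-verified Lean document; each statement's English description precedes it below -/
import Mathlib

section
/- Let n ≥ 1, l ∈ [0,2n], and 𝐚 = (a_1,…,a_l) a strictly increasing sequence of integers in [1,2n]. For each i ∈ [1,l], one has a_i ∈ Rem(𝐚) if and only if one of the following holds: (1) a_i is odd, i < l, a_{i+1} = a_i + 1, and a_i < 2i − |Rem(a_1,…,a_{i−1})|; (2) a_i is even, i > 1, a_{i−1} = a_i − 1, and a_i < 2i − |Rem(a_1,…,a_{i−2})| − 1. -/
/-- `remAux` computes the set of removable entries of a strictly increasing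
sequence, given as a list in *reversed* order (so the head is the last entry). -/
def remAux : List ℕ → Finset ℕ
  | [] => ∅
  | [_] => ∅
  | b :: a :: rest =>
    if Even b ∧ a + 1 = b ∧ b + (remAux rest).card + 1 < 2 * (rest.length + 2) then
      insert a (insert b (remAux rest))
    else remAux (a :: rest)

/-- `remSet 𝐚` : the set `Rem(𝐚)` of removable entries of the strictly
increasing sequence `𝐚 = (a_1, …, a_l)` (given in its natural order). -/
def remSet (l : List ℕ) : Finset ℕ := remAux l.reverse

/-- `redSeq 𝐚` : the reduction `red(𝐚)`, i.e. `𝐚` with the removable entries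
removed. -/
def redSeq (l : List ℕ) : List ℕ := l.filter (fun x => decide (x ∉ remSet l))

/-! Extending a sequence never shrinks `Rem`: a pair `(a_{k-1}, a_k)` is only removed when
`a_{k-1}` is odd, and appending an odd entry leaves `Rem` unchanged. Each extension adds at most
the two newest entries to `Rem`, so `a_i` enters `Rem` exactly when `a_i` (condition (2)) or
`a_{i+1}` (condition (1)) is appended, and stays there afterwards. -/

open Finset

-- The test `remAux` applies when `x, y` are appended to `p`.
abbrev RemovablePair (p : List ℕ) (x y : ℕ) : Prop :=
  Even y ∧ x + 1 = y ∧ y + #(remSet p) + 1 < 2 * (p.length + 2)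

theorem removablePair_iff_odd {p : List ℕ} {v w : ℕ} :
    RemovablePair p v w ↔ Odd v ∧ w = v + 1 ∧ v + #(remSet p) < 2 * (p.length + 1) := by
  constructor <;> rintro ⟨hpar, rfl, hlt⟩ <;> refine ⟨?_, rfl, by omega⟩ <;>
    simpa [Nat.even_add_one] using hpar

theorem remSet_nil : remSet [] = ∅ := rfl

theorem remSet_singleton (x : ℕ) : remSet [x] = ∅ := rfl

theorem remSet_append_pair (p : List ℕ) (x y : ℕ) :
    remSet (p ++ [x, y]) =
      if RemovablePair p x y then insert x (insert y (remSet p)) else remSet (p ++ [x]) := by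
  simp [remSet, remAux, RemovablePair]

theorem mem_of_mem_remAux {l : List ℕ} {v : ℕ} (h : v ∈ remAux l) : v ∈ l := by
  induction l using remAux.induct with
  | case1 | case2 => simp [remAux] at h
  | case3 b a rest hc ih =>
    rw [remAux, if_pos hc] at h
    simp only [Finset.mem_insert] at h
    rcases h with rfl | rfl | h <;> simp_all
  | case4 b a rest hc _ ih =>
    rw [remAux, if_neg hc] at h
    exact List.mem_cons_of_mem _ (ih h)

theorem mem_of_mem_remSet {l : List ℕ} {v : ℕ} (h : v ∈ remSet l) : v ∈ l :=
  List.mem_reverse.mp (mem_of_mem_remAux h)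

theorem remSet_append_singleton_of_odd (p : List ℕ) {x : ℕ} (hx : Odd x) :
    remSet (p ++ [x]) = remSet p := by
  rcases p.eq_nil_or_concat' with rfl | ⟨q, u, rfl⟩
  · rfl
  · rw [List.append_assoc, List.singleton_append, remSet_append_pair,
      if_neg fun h => Nat.not_even_iff_odd.mpr hx h.1]

theorem remSet_subset_append_singleton (p : List ℕ) (x : ℕ) : remSet p ⊆ remSet (p ++ [x]) := by
  rcases p.eq_nil_or_concat' with rfl | ⟨q, u, rfl⟩
  · simp [remSet_nil]
  · rw [List.append_assoc, List.singleton_append, remSet_append_pair]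
    split_ifs with h
    · rw [remSet_append_singleton_of_odd q (removablePair_iff_odd.mp h).1]
      exact (subset_insert _ _).trans (subset_insert _ _)
    · exact Subset.rfl

theorem remSet_subset_append (p s : List ℕ) : remSet p ⊆ remSet (p ++ s) := by
  induction s using List.reverseRecOn with
  | nil => simp
  | append_singleton s x ih =>
    rw [← List.append_assoc]
    exact ih.trans (remSet_subset_append_singleton _ x)

theorem remSet_append_pair_subset (p : List ℕ) (x y : ℕ) :
    remSet (p ++ [x, y]) ⊆ insert x (insert y (remSet (p ++ [x]))) := by
  rw [remSet_append_pair]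
  split_ifs
  · exact insert_subset_insert _ (insert_subset_insert _ (remSet_subset_append p [x]))
  · exact (subset_insert _ _).trans (subset_insert _ _)

theorem mem_remSet_append_cons_iff {q s : List ℕ} {v w : ℕ} (hv : v ∉ w :: s) :
    v ∈ remSet (q ++ w :: s) ↔ v ∈ remSet (q ++ [w]) := by
  refine ⟨fun h => ?_, fun h => by simpa using remSet_subset_append (q ++ [w]) s h⟩
  induction s generalizing q w with
  | nil => exact h
  | cons y s ih =>
    have hvw : v ≠ w := fun e => hv (e ▸ List.mem_cons_self)
    have hvy : v ≠ y := fun e => hv (e ▸ List.mem_cons_of_mem _ List.mem_cons_self)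
    have h' : v ∈ remSet (q ++ [w, y]) := by
      simpa using ih (q := q ++ [w]) (List.not_mem_of_not_mem_cons hv) (by simpa using h)
    simpa only [mem_insert, hvw, hvy, false_or] using remSet_append_pair_subset q w y h'

theorem mem_remSet_append_pair_iff (p : List ℕ) (v w : ℕ) :
    v ∈ remSet (p ++ [v, w]) ↔ RemovablePair p v w ∨ v ∈ remSet (p ++ [v]) := by
  rw [remSet_append_pair]
  split_ifs with h
  · exact iff_of_true (by simp) (Or.inl h)
  · simp only [h, false_or]

theorem mem_remSet_append_singleton_iff {p : List ℕ} {v : ℕ} (hv : v ∉ p) :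
    v ∈ remSet (p ++ [v]) ↔ ∃ q u, p = q ++ [u] ∧ RemovablePair q u v := by
  rcases p.eq_nil_or_concat' with rfl | ⟨q, u, rfl⟩
  · simp [remSet_singleton]
  · rw [List.append_assoc, List.singleton_append, remSet_append_pair]
    split_ifs with h
    · exact iff_of_true (by simp) ⟨q, u, rfl, h⟩
    · have hnot : v ∉ remSet (q ++ [u]) := fun hm => hv (mem_of_mem_remSet hm)
      simp [hnot, h]

theorem mem_remSet_iff {p s : List ℕ} {v : ℕ} (hp : v ∉ p) (hs : v ∉ s) :
    v ∈ remSet (p ++ v :: s) ↔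
      (∃ w s', s = w :: s' ∧ RemovablePair p v w) ∨ ∃ q u, p = q ++ [u] ∧ RemovablePair q u v := by
  rcases s with _ | ⟨w, s⟩
  · simp [mem_remSet_append_singleton_iff hp]
  · rw [← List.singleton_append, ← List.append_assoc, mem_remSet_append_cons_iff hs,
      List.append_assoc, List.singleton_append, mem_remSet_append_pair_iff,
      mem_remSet_append_singleton_iff hp]
    simp

theorem stmt5_general (a : List ℕ)
    (hinc : a.Chain' (· < ·)) (i : ℕ) (hi1 : 1 ≤ i) (hil : i ≤ a.length) :
    a.getD (i - 1) 0 ∈ remSet a ↔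
      (Odd (a.getD (i - 1) 0) ∧ i < a.length ∧
        a.getD i 0 = a.getD (i - 1) 0 + 1 ∧
        a.getD (i - 1) 0 + (remSet (a.take (i - 1))).card < 2 * i) ∨
      (Even (a.getD (i - 1) 0) ∧ 1 < i ∧
        a.getD (i - 2) 0 + 1 = a.getD (i - 1) 0 ∧
        a.getD (i - 1) 0 + (remSet (a.take (i - 2))).card + 1 < 2 * i) := by
  obtain ⟨j, rfl⟩ : ∃ j, i = j + 1 := ⟨i - 1, by omega⟩
  obtain ⟨p, v, s, rfl, rfl⟩ : ∃ p v s, a = p ++ v :: s ∧ j = p.length :=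
    ⟨a.take j, a[j], a.drop (j + 1), by rw [← List.drop_eq_getElem_cons, List.take_append_drop],
      by simp; omega⟩
  have hv : v ∉ p ++ s := List.nodup_cons.mp
    (List.nodup_middle.mp (List.isChain_iff_pairwise.mp hinc).nodup) |>.1
  rw [List.mem_append, not_or] at hv
  have hget : (p ++ v :: s).getD p.length 0 = v := by simp
  rw [Nat.add_sub_cancel, hget, List.take_left, mem_remSet_iff hv.1 hv.2]
  refine or_congr ?_ ?_
  · rcases s with _ | ⟨w, s⟩ <;> simp [removablePair_iff_odd]
  · rcases p.eq_nil_or_concat' with rfl | ⟨q, u, rfl⟩ <;> simp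

theorem stmt5 (n : ℕ) (hn : 1 ≤ n) (a : List ℕ)
    (hinc : a.Chain' (· < ·)) (hbd : ∀ x ∈ a, 1 ≤ x ∧ x ≤ 2 * n)
    (hlen : a.length ≤ 2 * n) (i : ℕ) (hi1 : 1 ≤ i) (hil : i ≤ a.length) :
    a.getD (i - 1) 0 ∈ remSet a ↔
      (Odd (a.getD (i - 1) 0) ∧ i < a.length ∧
        a.getD i 0 = a.getD (i - 1) 0 + 1 ∧
        a.getD (i - 1) 0 + (remSet (a.take (i - 1))).card < 2 * i) ∨
      (Even (a.getD (i - 1) 0) ∧ 1 < i ∧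
        a.getD (i - 2) 0 + 1 = a.getD (i - 1) 0 ∧
        a.getD (i - 1) 0 + (remSet (a.take (i - 2))).card + 1 < 2 * i) :=
  stmt5_general a hinc i hi1 hil
end

section
/- Let n ≥ 1, l ∈ [0,2n], and 𝐚 = (a_1,…,a_l) a strictly increasing sequence of integers in [1,2n]. If i ∈ [1,l] is such that a_i ∉ Rem(𝐚), then Rem(𝐚) = Rem(a_1,…,a_{i−1}) ⊔ ({a_{i+1},…,a_l} ∩ Rem(𝐚)). -/
theorem remAux_subset_toFinset (L : List ℕ) : remAux L ⊆ L.toFinset := by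
  induction L using remAux.induct with
  | case1 | case2 => simp [remAux]
  | case3 b a rest h ih =>
    rw [remAux, if_pos h]
    intro y hy
    simp only [Finset.mem_insert] at hy
    rcases hy with rfl | rfl | hy <;> simp_all [Finset.subset_iff]
  | case4 b a rest h _ ih =>
    rw [remAux, if_neg h]
    exact ih.trans (by rw [List.toFinset_cons (a := b)]; exact Finset.subset_insert _ _)

theorem remSet_subset_toFinset (l : List ℕ) : remSet l ⊆ l.toFinset := by
  simpa [remSet] using remAux_subset_toFinset l.reverse

theorem remAux_cons_eq_of_not_mem {x : ℕ} {R : List ℕ} (hx : x ∉ remAux (x :: R)) :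
    remAux (x :: R) = remAux R := by
  match R, hx with
  | [], _ => rfl
  | a :: rest, hx =>
    rw [remAux] at hx ⊢
    split_ifs at hx ⊢ with h
    · simp at hx
    · rfl

theorem exists_remAux_append_cons_eq {x : ℕ} {R : List ℕ} :
    ∀ P : List ℕ, x ∉ remAux (P ++ x :: R) →
      ∃ S ⊆ P.toFinset, remAux (P ++ x :: R) = S ∪ remAux R
  | [], hx => ⟨∅, by simp, by simpa using remAux_cons_eq_of_not_mem hx⟩
  | [p], hx => by
    rw [List.singleton_append, remAux] at hx ⊢
    split_ifs at hx ⊢ with h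
    · simp at hx
    · exact ⟨∅, by simp, by simpa using remAux_cons_eq_of_not_mem hx⟩
  | p :: a :: P, hx => by
    simp only [List.cons_append] at hx ⊢
    rw [remAux] at hx ⊢
    split_ifs at hx ⊢ with h
    · obtain ⟨S, hSP, hS⟩ :=
        exists_remAux_append_cons_eq (x := x) (R := R) P fun hmem => hx (by simp [hmem])
      refine ⟨insert a (insert p S), ?_, by simp [hS]⟩
      intro y hy
      simp only [Finset.mem_insert] at hy
      rcases hy with rfl | rfl | hy <;> simp_all [Finset.subset_iff]
    · obtain ⟨S, hSP, hS⟩ := exists_remAux_append_cons_eq (a :: P) hx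
      rw [List.cons_append] at hS
      exact ⟨S, hSP.trans (by rw [List.toFinset_cons (a := p)]; exact Finset.subset_insert _ _), hS⟩

theorem remSet_append_cons_of_not_mem {L R : List ℕ} {x : ℕ}
    (hx : x ∉ remSet (L ++ x :: R)) :
    remSet (L ++ x :: R) = remSet L ∪ (R.toFinset ∩ remSet (L ++ x :: R)) := by
  have hrev : (L ++ x :: R).reverse = R.reverse ++ x :: L.reverse := by simp
  rw [remSet, hrev] at hx
  obtain ⟨S, hSR, hS⟩ := exists_remAux_append_cons_eq R.reverse hx
  rw [List.toFinset_reverse] at hSR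
  simp only [remSet, hrev, hS]
  ext y
  simp only [Finset.mem_union, Finset.mem_inter]
  have := @hSR y
  tauto

theorem stmt9_general (a : List ℕ)
    (hinc : a.Chain' (· < ·)) (i : ℕ) (hi1 : 1 ≤ i) (hil : i ≤ a.length)
    (hni : a.getD (i - 1) 0 ∉ remSet a) :
    remSet a = remSet (a.take (i - 1)) ∪ ((a.drop i).toFinset ∩ remSet a) ∧
    Disjoint (remSet (a.take (i - 1))) ((a.drop i).toFinset ∩ remSet a) := by
  obtain ⟨j, rfl⟩ : ∃ j, i = j + 1 := ⟨i - 1, by omega⟩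
  have hj : j < a.length := hil
  rw [Nat.add_sub_cancel] at hni ⊢
  rw [List.getD_eq_getElem a 0 hj] at hni
  have hsplit : a.take j ++ a[j] :: a.drop (j + 1) = a := by
    rw [List.cons_getElem_drop_succ, List.take_append_drop]
  have hnd : (a.take j ++ a[j] :: a.drop (j + 1)).Nodup := by
    rw [hsplit]
    exact (List.isChain_iff_pairwise.mp hinc).imp Nat.ne_of_lt
  have hdisj : Disjoint (a.take j).toFinset (a.drop (j + 1)).toFinset :=
    List.disjoint_toFinset_iff_disjoint.mpr fun _ hL hR =>
      List.disjoint_of_nodup_append hnd hL (.tail _ hR)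
  refine ⟨?_, (hdisj.mono_left (remSet_subset_toFinset _)).mono_right Finset.inter_subset_left⟩
  have key := remSet_append_cons_of_not_mem (L := a.take j) (R := a.drop (j + 1))
    (by rwa [hsplit])
  rwa [hsplit] at key

theorem stmt9 (n : ℕ) (hn : 1 ≤ n) (a : List ℕ)
    (hinc : a.Chain' (· < ·)) (hbd : ∀ x ∈ a, 1 ≤ x ∧ x ≤ 2 * n)
    (hlen : a.length ≤ 2 * n) (i : ℕ) (hi1 : 1 ≤ i) (hil : i ≤ a.length)
    (hni : a.getD (i - 1) 0 ∉ remSet a) :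
    remSet a = remSet (a.take (i - 1)) ∪ ((a.drop i).toFinset ∩ remSet a) ∧
    Disjoint (remSet (a.take (i - 1))) ((a.drop i).toFinset ∩ remSet a) :=
  stmt9_general a hinc i hi1 hil hni
end

section
/- Let n ≥ 1, l ∈ [0,2n], and 𝐚 = (a_1,…,a_l) a strictly increasing sequence of integers in [1,2n]. Then 0 ≤ l − |Rem(𝐚)| ≤ min(l, 2n − l). In particular, |Rem(𝐚)| ≥ 2(l − n). -/
lemma remAux_odd (a : ℕ) (rest : List ℕ) (h : ¬ Even a) :
    remAux (a :: rest) = remAux rest := by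
  cases rest with
  | nil => rfl
  | cons c t => rw [remAux, if_neg (by tauto)]

lemma remAux_mem : ∀ (r : List ℕ) (x : ℕ), x ∈ remAux r → x ∈ r := by
  intro r
  induction r using remAux.induct with
  | case1 => simp [remAux]
  | case2 b => simp [remAux]
  | case3 b a rest h ih =>
    intro x hx
    rw [remAux, if_pos h] at hx
    simp only [Finset.mem_insert] at hx
    rcases hx with rfl | rfl | hx
    · simp
    · simp
    · simp [ih x hx]
  | case4 b a rest h ih1 ih2 =>
    intro x hx
    rw [remAux, if_neg h] at hx
    have := ih2 x hx
    simp at this ⊢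
    tauto

lemma remAux_key : ∀ (r : List ℕ), r.Pairwise (· > ·) → (∀ x ∈ r, 1 ≤ x) →
    (remAux r).card ≤ r.length ∧ Even (remAux r).card ∧
      ∀ b t, r = b :: t → 2 * r.length ≤ b + 1 + (remAux r).card := by
  intro r
  induction r using remAux.induct with
  | case1 => simp [remAux]
  | case2 c =>
    intro _ h1
    refine ⟨by simp [remAux], by simp [remAux], ?_⟩
    intro b t heq
    injection heq with e1 e2
    subst e1
    have := h1 c (by simp)
    simp [remAux]; omega
  | case3 b a rest hcond ih =>
    rintro hp h1
    have hp' : rest.Pairwise (· > ·) := (List.pairwise_cons.1 (List.pairwise_cons.1 hp).2).2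
    obtain ⟨hc1, hc2, hc3⟩ := ih hp' (fun x hx => h1 x (by simp [hx]))
    have hab : a < b := (List.pairwise_cons.1 hp).1 a (by simp)
    have hbr : ∀ x ∈ rest, x < b := fun x hx => (List.pairwise_cons.1 hp).1 x (by simp [hx])
    have har : ∀ x ∈ rest, x < a := fun x hx => (List.pairwise_cons.1 (List.pairwise_cons.1 hp).2).1 x hx
    have hbnot : b ∉ remAux rest := fun hmem => absurd (hbr b (remAux_mem rest b hmem)) (lt_irrefl b)
    have hanot : a ∉ insert b (remAux rest) := by
      simp only [Finset.mem_insert]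
      rintro (rfl | hmem)
      · exact absurd hab (lt_irrefl a)
      · exact absurd (har a (remAux_mem rest a hmem)) (lt_irrefl a)
    have hcard : (remAux (b :: a :: rest)).card = (remAux rest).card + 2 := by
      rw [remAux, if_pos hcond, Finset.card_insert_of_notMem hanot,
        Finset.card_insert_of_notMem hbnot]
    refine ⟨by simp [hcard]; omega, by rw [hcard]; rcases hc2 with ⟨k,hk⟩; exact ⟨k+1, by omega⟩, ?_⟩
    rintro b' t ⟨rfl, rfl⟩
    rw [hcard]
    simp only [List.length_cons]
    -- need 2*(rest.length+2) ≤ b + 1 + card + 2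
    cases rest with
    | nil =>
      have hb1 : 1 ≤ b := h1 b (by simp)
      simp [remAux]; omega
    | cons c t' =>
      have := hc3 c t' rfl
      have hca : c < a := har c (by simp)
      simp only [List.length_cons] at this ⊢
      omega
  | case4 b a rest hcond ih1 ih2 =>
    rintro hp h1
    have hp2 : (a :: rest).Pairwise (· > ·) := (List.pairwise_cons.1 hp).2
    obtain ⟨hc1, hc2, hc3⟩ := ih2 hp2 (fun x hx => h1 x (by simp at hx ⊢; tauto))
    have hab : a < b := (List.pairwise_cons.1 hp).1 a (by simp)
    have heq : remAux (b :: a :: rest) = remAux (a :: rest) := by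
      rw [remAux, if_neg hcond]
    rw [heq]
    have key := hc3 a rest rfl
    refine ⟨by simp at hc1 ⊢; omega, hc2, ?_⟩
    rintro b' t ⟨rfl, rfl⟩
    simp only [List.length_cons] at key ⊢
    -- need 2*(rest.length+2) ≤ b + 1 + card
    by_cases hd : a + 1 = b
    · subst hd
      by_cases he : Even (a + 1)
      · -- condition failed because of the inequality
        have hfail : ¬ (a + 1) + (remAux rest).card + 1 < 2 * (rest.length + 2) := by tauto
        have hodd : ¬ Even a := by rw [Nat.even_add_one] at he; exact he
        rw [remAux_odd a rest hodd]
        omega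
      · -- b odd, use parity
        obtain ⟨k, hk⟩ := hc2
        rw [Nat.even_add_one, not_not] at he
        obtain ⟨m, hm⟩ := he
        omega
    · omega

theorem stmt10 (n : ℕ) (hn : 1 ≤ n) (a : List ℕ)
    (hinc : a.Chain' (· < ·)) (hbd : ∀ x ∈ a, 1 ≤ x ∧ x ≤ 2 * n)
    (hlen : a.length ≤ 2 * n) :
    (0 ≤ (a.length : ℤ) - (remSet a).card ∧
      (a.length : ℤ) - (remSet a).card ≤
        min (a.length : ℤ) (2 * n - a.length)) ∧
    2 * ((a.length : ℤ) - n) ≤ ((remSet a).card : ℤ) := by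
  have hpair : a.reverse.Pairwise (· > ·) := by
    rw [List.pairwise_reverse]
    exact (List.isChain_iff_pairwise.1 hinc).imp (fun h => h)
  obtain ⟨hc1, hc2, hc3⟩ := remAux_key a.reverse hpair
    (fun x hx => (hbd x (List.mem_reverse.1 hx)).1)
  rw [List.length_reverse] at hc1
  cases hrev : a.reverse with
  | nil =>
    have ha : a = [] := by simpa using congrArg List.reverse hrev
    subst ha
    simp [remSet, remAux]
  | cons b t =>
    have hb2n : b ≤ 2 * n := (hbd b (List.mem_reverse.1 (by rw [hrev]; simp))).2
    have key := hc3 b t hrev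
    rw [List.length_reverse] at key
    obtain ⟨k, hk⟩ := hc2
    have hcard : (remSet a).card = (remAux a.reverse).card := rfl
    rw [hcard]
    have h2 : 2 * a.length ≤ 2 * n + (remAux a.reverse).card := by omega
    constructor
    · constructor
      · omega
      · rw [le_min_iff]
        constructor <;> push_cast <;> omega
    · push_cast; omega
end

section
/- Let n ≥ 1, l ∈ [0,2n], 𝐚 = (a_1,…,a_l) a strictly increasing sequence of integers in [1,2n], and i ∈ [1,l]. Then: (1) if a_i is odd, then |Rem(a_1,…,a_{i−1})| ≥ 2i − a_i − 1; (2) if a_i is even, then |Rem(a_1,…,a_i)| ≥ 2i − a_i. -/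
/-!
Read the sequence backwards, `L = (a_i, …, a_1)`, and write `R(L)` for its removable entries.
Both claims follow from the single bound `2 |L| ≤ |R(L)| + a_i + 1`, proved by induction on `|L|`.
Going from `(a, …)` to `(b, a, …)` adds `2` on the left; `b ≥ a + 1` pays for one unit and the
other comes from the removed pair `(a, b)`, from `b ≥ a + 2`, from the parity of `|R|` when `a` is
even, or, when `a = b - 1` is odd but the pair is kept, from the failed size condition. For even
`a_i` the `+ 1` is then absorbed by parity, as `R(L)` is a union of pairs; for odd `a_i` the last
entry never heads a removable pair, so `R(L) = R(a_{i-1}, …, a_1)`.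
-/

theorem mem_of_mem_remAux_s11 {L : List ℕ} {x : ℕ} (hx : x ∈ remAux L) : x ∈ L := by
  induction L using remAux.induct with
  | case1 | case2 => simp [remAux] at hx
  | case3 b a rest hc ih =>
    rw [remAux, if_pos hc] at hx
    rcases Finset.mem_insert.mp hx with rfl | hx
    · simp
    rcases Finset.mem_insert.mp hx with rfl | hx
    · simp
    · exact List.mem_cons_of_mem b (List.mem_cons_of_mem a (ih hx))
  | case4 b a rest hc _ ih =>
    rw [remAux, if_neg hc] at hx
    exact List.mem_cons_of_mem b (ih hx)

theorem notMem_remAux_of_forall_lt {L : List ℕ} {x : ℕ} (h : ∀ y ∈ L, y < x) :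
    x ∉ remAux L :=
  fun hx ↦ lt_irrefl x (h x (mem_of_mem_remAux_s11 hx))

theorem remAux_cons_of_odd {a : ℕ} (t : List ℕ) (ha : Odd a) : remAux (a :: t) = remAux t := by
  cases t with
  | nil => rfl
  | cons c t => exact if_neg fun h ↦ Nat.not_even_iff_odd.mpr ha h.1

theorem card_insert_insert_remAux {b a : ℕ} {rest : List ℕ}
    (h : (b :: a :: rest).IsChain (· > ·)) :
    (insert a (insert b (remAux rest))).card = (remAux rest).card + 2 := by
  obtain ⟨hb, hrest⟩ := List.pairwise_cons.mp (List.isChain_iff_pairwise.mp h)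
  have ha := (List.pairwise_cons.mp hrest).1
  have hab : a < b := hb a List.mem_cons_self
  have hb' : b ∉ remAux rest :=
    notMem_remAux_of_forall_lt fun y hy ↦ hb y (List.mem_cons_of_mem a hy)
  have ha' : a ∉ insert b (remAux rest) := by
    rw [Finset.mem_insert, not_or]
    exact ⟨hab.ne, notMem_remAux_of_forall_lt ha⟩
  rw [Finset.card_insert_of_notMem ha', Finset.card_insert_of_notMem hb']

theorem even_card_remAux {L : List ℕ} (h : L.IsChain (· > ·)) : Even (remAux L).card := by
  induction L using remAux.induct with
  | case1 | case2 => simp [remAux]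
  | case3 b a rest hc ih =>
    rw [remAux, if_pos hc, card_insert_insert_remAux h]
    exact (ih h.tail.tail).add even_two
  | case4 b a rest hc _ ih =>
    rw [remAux, if_neg hc]
    exact ih h.tail

theorem two_mul_length_le_card_remAux {b : ℕ} {rest : List ℕ}
    (h : (b :: rest).IsChain (· > ·)) (h0 : 0 ∉ b :: rest) :
    2 * (rest.length + 1) ≤ (remAux (b :: rest)).card + b + 1 := by
  induction rest generalizing b with
  | nil =>
    have : b ≠ 0 := fun hb ↦ h0 (hb ▸ List.mem_cons_self)
    rw [remAux, Finset.card_empty, List.length_nil]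
    omega
  | cons a rest ih =>
    have hab : a < b := (List.isChain_cons_cons.mp h).1
    have ih := ih h.tail (fun h' ↦ h0 (List.mem_cons_of_mem b h'))
    simp only [List.length_cons] at ih ⊢
    by_cases hc : Even b ∧ a + 1 = b ∧ b + (remAux rest).card + 1 < 2 * (rest.length + 2)
    · have ha : Odd a := Nat.not_even_iff_odd.mp (Nat.even_add_one.mp (hc.2.1 ▸ hc.1))
      rw [remAux_cons_of_odd rest ha] at ih
      rw [remAux, if_pos hc, card_insert_insert_remAux h]
      omega
    · rw [remAux, if_neg hc]
      rcases Nat.even_or_odd a with ha | ha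
      · obtain ⟨k, hk⟩ := even_card_remAux (L := a :: rest) h.tail
        obtain ⟨m, rfl⟩ := ha
        omega
      · rw [remAux_cons_of_odd rest ha] at ih ⊢
        rcases Nat.lt_or_ge (a + 1) b with hlt | hle
        · omega
        · have hb : Even b := (show a + 1 = b by omega) ▸ ha.add_one
          have := not_lt.mp fun hlt ↦ hc ⟨hb, by omega, hlt⟩
          omega

theorem two_mul_length_le_card_remAux_tail_of_odd {b : ℕ} {rest : List ℕ} (h : (b :: rest).IsChain (· > ·))
    (h0 : 0 ∉ b :: rest) (hb : Odd b) :
    2 * (rest.length + 1) ≤ (remAux rest).card + b + 1 := by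
  simpa only [remAux_cons_of_odd rest hb] using two_mul_length_le_card_remAux h h0

theorem two_mul_length_le_card_remAux_of_even {b : ℕ} {rest : List ℕ} (h : (b :: rest).IsChain (· > ·))
    (h0 : 0 ∉ b :: rest) (hb : Even b) :
    2 * (rest.length + 1) ≤ (remAux (b :: rest)).card + b := by
  have hle := two_mul_length_le_card_remAux h h0
  obtain ⟨k, hk⟩ := even_card_remAux h
  obtain ⟨m, rfl⟩ := hb
  omega

theorem stmt11_general (n : ℕ) (a : List ℕ)
    (hinc : a.Chain' (· < ·)) (hbd : ∀ x ∈ a, 1 ≤ x ∧ x ≤ 2 * n)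
    (i : ℕ) (hi1 : 1 ≤ i) (hil : i ≤ a.length) :
    (Odd (a.getD (i - 1) 0) →
      2 * (i : ℤ) - a.getD (i - 1) 0 - 1 ≤ ((remSet (a.take (i - 1))).card : ℤ)) ∧
    (Even (a.getD (i - 1) 0) →
      2 * (i : ℤ) - a.getD (i - 1) 0 ≤ ((remSet (a.take i)).card : ℤ)) := by
  obtain ⟨j, rfl⟩ : ∃ j, i = j + 1 := ⟨i - 1, by omega⟩
  have hj : j < a.length := hil
  have hrev : (a.take (j + 1)).reverse = a[j] :: (a.take j).reverse := by
    rw [List.take_add_one, List.getElem?_eq_getElem hj, Option.toList_some, List.reverse_append]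
    rfl
  have hchain : (a[j] :: (a.take j).reverse).IsChain (· > ·) :=
    hrev ▸ List.isChain_reverse.mpr (hinc.take (j + 1))
  have h0 : 0 ∉ a[j] :: (a.take j).reverse := fun h ↦ by
    rw [← hrev, List.mem_reverse] at h
    exact Nat.not_succ_le_zero 0 (hbd 0 (List.mem_of_mem_take h)).1
  have hlen : (a.take j).reverse.length = j := by
    rw [List.length_reverse, List.length_take]
    omega
  rw [Nat.add_sub_cancel, List.getD_eq_getElem a 0 hj, remSet, remSet, hrev]
  refine ⟨fun ho ↦ ?_, fun he ↦ ?_⟩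
  · have := two_mul_length_le_card_remAux_tail_of_odd hchain h0 ho
    omega
  · have := two_mul_length_le_card_remAux_of_even hchain h0 he
    omega

theorem stmt11 (n : ℕ) (hn : 1 ≤ n) (a : List ℕ)
    (hinc : a.Chain' (· < ·)) (hbd : ∀ x ∈ a, 1 ≤ x ∧ x ≤ 2 * n)
    (hlen : a.length ≤ 2 * n) (i : ℕ) (hi1 : 1 ≤ i) (hil : i ≤ a.length) :
    (Odd (a.getD (i - 1) 0) →
      2 * (i : ℤ) - a.getD (i - 1) 0 - 1 ≤ ((remSet (a.take (i - 1))).card : ℤ)) ∧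
    (Even (a.getD (i - 1) 0) →
      2 * (i : ℤ) - a.getD (i - 1) 0 ≤ ((remSet (a.take i)).card : ℤ)) :=
  stmt11_general n a hinc hbd i hi1 hil
end

section
/- Let n ≥ 1, λ a partition of length at most 2n, and T ∈ SST_{2n}(λ). Set μ := shape of suc(T). Then μ ⊆ λ and λ/μ is a vertical strip; moreover μ = λ if and only if suc(T) = T. -/
/-- `part lam i` : the `i`-th part (1-indexed) of the partition `lam`,
with `lam_i = 0` for `i > ℓ(lam)`. -/
def part (lam : List ℕ) (i : ℕ) : ℕ := lam.getD (i - 1) 0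

/-- A partition: a weakly decreasing finite sequence of positive integers. -/
def IsPartition (lam : List ℕ) : Prop :=
  lam.Pairwise (· ≥ ·) ∧ ∀ x ∈ lam, 0 < x

/-!  We represent a semistandard tableau by its list of columns (left to
right), each column being the list of its entries read from top to bottom. -/

/-- Column insertion `w → T` of `w` into the tableau `T` (given as a list of
columns): `w` is inserted into the first column, bumping the smallest entry
`≥ w` into the next column, and so on; the last bumped entry is placed at the
bottom of the first column that accommodates it. -/
def colInsert (w : ℕ) : List (List ℕ) → List (List ℕ)
  | [] => [[w]]
  | c :: rest =>
    match c.dropWhile (fun y => decide (y < w)) with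
    | [] => (c ++ [w]) :: rest
    | x :: c₂ => (c.takeWhile (fun y => decide (y < w)) ++ w :: c₂) :: colInsert x rest

/-- Insert the entries of the column `b = (b_1, …, b_k)` (top to bottom)
successively into `T`; this is the plactic product `b * T`. -/
def insertCol (b : List ℕ) (T : List (List ℕ)) : List (List ℕ) :=
  b.foldl (fun t w => colInsert w t) T

/-- The successor map: `suc T = red(𝐚) * T'`, where `𝐚` is the first column
of `T` and `T'` consists of the remaining columns. -/
def suc : List (List ℕ) → List (List ℕ)
  | [] => []
  | c :: rest => insertCol (redSeq c) rest

/-- `rowLen T i` : the length `λ_i` of the `i`-th row of the tableau `T`,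
i.e. the number of columns of length `≥ i`. -/
def rowLen (T : List (List ℕ)) (i : ℕ) : ℕ :=
  T.countP (fun c => decide (i ≤ c.length))

/-- Validity of the column representation of a semistandard tableau with
entries in `[1, m]`: columns are nonempty and strictly increasing (top to
bottom) with entries in `[1, m]`, column lengths weakly decrease from left to
right, and rows weakly increase from left to right. -/
def IsTableau (m : ℕ) (T : List (List ℕ)) : Prop :=
  (∀ c ∈ T, c ≠ []) ∧
  (∀ c ∈ T, c.Chain' (· < ·)) ∧
  (∀ c ∈ T, ∀ x ∈ c, 1 ≤ x ∧ x ≤ m) ∧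
  T.Chain' (fun c c' => c'.length ≤ c.length ∧
    ∀ r < c'.length, c.getD r 0 ≤ c'.getD r 0)

/-- `T` has shape `lam`. -/
def hasShape (T : List (List ℕ)) (lam : List ℕ) : Prop :=
  ∀ i, 1 ≤ i → rowLen T i = part lam i

/-- `T` is symplectic: the entry in the `k`-th row of the first column is
at least `2k - 1`. -/
def IsSymplectic (T : List (List ℕ)) : Prop :=
  ∀ k, 1 ≤ k → k ≤ (T.headD []).length → 2 * k - 1 ≤ (T.headD []).getD (k - 1) 0

/-!
Write `T = c :: S`, so that `suc T = insertCol b S` with `b = red(c)` a subsequence of `c`.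
Column-inserting an entry of `c` into `S` keeps `c :: S` a tableau and adds a single box, in a row
at most `ℓ(c)`; inserting a larger entry afterwards adds its box strictly lower. Hence the shape
of `suc T` is that of `S` plus `|b|` boxes in distinct rows among `1, …, ℓ(c)`, while `λ` is the
shape of `S` plus one box in each of these rows. Equality of the shapes forces `|b| = ℓ(c)`, i.e.
`b = c`, and inserting the first column of a tableau into the remaining columns rebuilds it.
-/

open List

lemma getD_lt_getD_of_isChain {c : List ℕ} (hc : c.IsChain (· < ·)) {i j : ℕ} (hij : i < j)
    (hj : j < c.length) : c.getD i 0 < c.getD j 0 := by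
  rw [getD_eq_getElem _ _ (hij.trans hj), getD_eq_getElem _ _ hj]
  exact pairwise_iff_getElem.mp (isChain_iff_pairwise.mp hc) i j _ hj hij

lemma getD_le_getD_of_isChain {c : List ℕ} (hc : c.IsChain (· < ·)) {i j : ℕ} (hij : i ≤ j)
    (hj : j < c.length) : c.getD i 0 ≤ c.getD j 0 := by
  rcases hij.eq_or_lt with rfl | hij
  · exact le_rfl
  · exact (getD_lt_getD_of_isChain hc hij hj).le

lemma getD_set_of_lt {d : List ℕ} {q w r : ℕ} (hr : r < d.length) :
    (d.set q w).getD r 0 = if q = r then w else d.getD r 0 := by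
  rw [getD_eq_getElem _ _ (by rwa [length_set]), getElem_set, getD_eq_getElem _ _ hr]

/-- The (0-based) position at which column insertion puts `w` into the column `d`. -/
def insertPos (w : ℕ) (d : List ℕ) : ℕ := (d.takeWhile fun y => decide (y < w)).length

section insertPos

variable {w : ℕ} {d : List ℕ}

lemma takeWhile_eq_take_insertPos :
    d.takeWhile (fun y => decide (y < w)) = d.take (insertPos w d) :=
  prefix_iff_eq_take.mp (takeWhile_prefix _)

lemma dropWhile_eq_drop_insertPos :
    d.dropWhile (fun y => decide (y < w)) = d.drop (insertPos w d) := by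
  have h := takeWhile_append_dropWhile (p := fun y => decide (y < w)) (l := d)
  rw [takeWhile_eq_take_insertPos] at h
  exact append_cancel_left (h.trans (take_append_drop _ _).symm)

lemma insertPos_le_length : insertPos w d ≤ d.length :=
  (takeWhile_prefix _).sublist.length_le

lemma getD_lt_of_lt_insertPos {i : ℕ} (hi : i < insertPos w d) : d.getD i 0 < w := by
  have hlt : i < (d.take (insertPos w d)).length := by
    rw [length_take]; exact lt_min hi (hi.trans_le insertPos_le_length)
  have hmem : d.getD i 0 ∈ d.takeWhile (fun y => decide (y < w)) := by
    rw [takeWhile_eq_take_insertPos, getD_eq_getElem _ _ (hi.trans_le insertPos_le_length)]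
    simpa using getElem_mem hlt
  simpa using mem_takeWhile_imp hmem

lemma le_getD_insertPos (h : insertPos w d < d.length) : w ≤ d.getD (insertPos w d) 0 := by
  have hne : d.dropWhile (fun y => decide (y < w)) ≠ [] := by
    rw [dropWhile_eq_drop_insertPos]; simpa using h
  have hhead := head_dropWhile_not (fun y => decide (y < w)) hne
  simp only [dropWhile_eq_drop_insertPos, head_drop, decide_eq_false_iff_not, not_lt] at hhead
  rwa [getD_eq_getElem _ _ h]

lemma le_insertPos {k : ℕ} (hk : k ≤ d.length) (h : ∀ i < k, d.getD i 0 < w) :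
    k ≤ insertPos w d := by
  by_contra! hlt
  exact (le_getD_insertPos (hlt.trans_le hk)).not_gt (h _ hlt)

lemma insertPos_eq_length_iff : insertPos w d = d.length ↔ ∀ y ∈ d, y < w := by
  have h : insertPos w d = d.length ↔ d.takeWhile (fun y => decide (y < w)) = d :=
    ⟨(takeWhile_prefix _).eq_of_length, fun h => by rw [insertPos, h]⟩
  rw [h, takeWhile_eq_self_iff]
  simp

lemma insertPos_append_of_lt {pfx t : List ℕ} (hpfx : ∀ y ∈ pfx, y < w)
    (ht : ∀ y ∈ t.head?, w ≤ y) : insertPos w (pfx ++ t) = pfx.length := by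
  rw [insertPos, takeWhile_append_of_pos (by simpa using hpfx), length_append]
  rcases t with _ | ⟨t₀, t⟩
  · simp
  · simp [show ¬ t₀ < w from not_lt.mpr (ht t₀ rfl)]

end insertPos

lemma colInsert_cons (w : ℕ) (d : List ℕ) (S : List (List ℕ)) :
    colInsert w (d :: S) =
      if insertPos w d < d.length then
        d.set (insertPos w d) w :: colInsert (d.getD (insertPos w d) 0) S
      else (d ++ [w]) :: S := by
  simp only [colInsert]
  rw [dropWhile_eq_drop_insertPos]
  split_ifs with h
  · rw [drop_eq_getElem_cons h, takeWhile_eq_take_insertPos, ← getD_eq_getElem _ 0 h,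
      set_eq_take_append_cons_drop, if_pos h]
  · rw [drop_eq_nil_of_le (not_lt.mp h)]

lemma headD_colInsert (x : ℕ) (S : List (List ℕ)) :
    (colInsert x S).headD [] =
      if insertPos x (S.headD []) < (S.headD []).length then
        (S.headD []).set (insertPos x (S.headD [])) x
      else S.headD [] ++ [x] := by
  rcases S with _ | ⟨d, S⟩
  · simp [colInsert, insertPos]
  · rw [colInsert_cons, headD_cons]; split_ifs <;> rfl

/-- The column `d` may stand immediately to the right of the column `c`. -/
def ColLE (c d : List ℕ) : Prop :=
  d.length ≤ c.length ∧ ∀ r < d.length, c.getD r 0 ≤ d.getD r 0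

lemma colLE_nil (c : List ℕ) : ColLE c [] := ⟨Nat.zero_le _, fun _ h => (Nat.not_lt_zero _ h).elim⟩

lemma insertPos_le_of_colLE {c d : List ℕ} {x i : ℕ} (h : ColLE c d) (hx : x ≤ c.getD i 0) :
    insertPos x d ≤ i := by
  by_contra! hi
  have hid : i < d.length := hi.trans_le insertPos_le_length
  exact (getD_lt_of_lt_insertPos hi).not_ge (hx.trans (h.2 i hid))

lemma isTableau_cons_iff {m : ℕ} {c : List ℕ} {S : List (List ℕ)} :
    IsTableau m (c :: S) ↔
      (c ≠ [] ∧ c.IsChain (· < ·) ∧ ∀ x ∈ c, 1 ≤ x ∧ x ≤ m) ∧ ColLE c (S.headD []) ∧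
        IsTableau m S := by
  rcases S with _ | ⟨d, S⟩
  · simp [IsTableau, colLE_nil, List.Chain']
  · simp only [IsTableau, List.Chain', isChain_cons_cons, mem_cons, forall_eq_or_imp, headD_cons]
    unfold ColLE
    tauto

lemma ColLE.set_left {c d : List ℕ} {q w : ℕ} (h : ColLE c d) (hw : w ≤ c.getD q 0) :
    ColLE (c.set q w) d := by
  refine ⟨by simpa using h.1, fun r hr => ?_⟩
  rw [getD_set_of_lt (hr.trans_le h.1)]
  split_ifs with hqr
  · subst hqr; exact hw.trans (h.2 _ hr)
  · exact h.2 r hr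

lemma ColLE.append_left {c d : List ℕ} (h : ColLE c d) (l : List ℕ) : ColLE (c ++ l) d :=
  ⟨h.1.trans (by simp), fun r hr => by rw [getD_append _ _ _ _ (hr.trans_le h.1)]; exact h.2 r hr⟩

lemma isChain_set_of_lt_of_le {d : List ℕ} (hd : d.IsChain (· < ·)) {q w : ℕ}
    (hlow : ∀ j < q, d.getD j 0 < w) (hup : w ≤ d.getD q 0) : (d.set q w).IsChain (· < ·) := by
  rw [isChain_iff_getElem]
  intro i hi
  rw [length_set] at hi
  rw [← getD_eq_getElem _ 0, ← getD_eq_getElem _ 0, getD_set_of_lt (by omega), getD_set_of_lt hi]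
  have hstep := getD_lt_getD_of_isChain hd (Nat.lt_succ_self i) hi
  split_ifs with h1 h2 h2
  · omega
  · subst h1; exact hup.trans_lt hstep
  · exact hlow i (by omega)
  · exact hstep

lemma colLE_headD_colInsert {c : List ℕ} {S : List (List ℕ)} {x i : ℕ}
    (hc : c.IsChain (· < ·)) (hcS : ColLE c (S.headD [])) (hi : i < c.length)
    (hx : c.getD i 0 ≤ x) (hpos : insertPos x (S.headD []) ≤ i) :
    ColLE c ((colInsert x S).headD []) := by
  have hci : ∀ r ≤ i, c.getD r 0 ≤ x := fun r hr => (getD_le_getD_of_isChain hc hr hi).trans hx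
  rw [headD_colInsert]
  generalize S.headD [] = d at *
  split_ifs with hd
  · refine ⟨by simpa using hcS.1, fun r hr => ?_⟩
    rw [length_set] at hr
    rw [getD_set_of_lt hr]
    split_ifs with hqr
    · exact hqr ▸ hci _ hpos
    · exact hcS.2 r hr
  · have hq : insertPos x d = d.length := le_antisymm insertPos_le_length (not_lt.mp hd)
    refine ⟨by rw [length_append, length_singleton]; omega, fun r hr => ?_⟩
    rw [length_append, length_singleton] at hr
    rcases (Nat.lt_succ_iff.mp hr).lt_or_eq with hr | rfl
    · rw [getD_append _ _ _ _ hr]; exact hcS.2 r hr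
    · simpa using hci _ (hq ▸ hpos)

lemma isTableau_colInsert {m : ℕ} {S : List (List ℕ)} (hS : IsTableau m S) {w : ℕ}
    (hw : 1 ≤ w ∧ w ≤ m) : IsTableau m (colInsert w S) := by
  induction S generalizing w with
  | nil =>
    exact isTableau_cons_iff.mpr
      ⟨⟨by simp, isChain_singleton _, by simpa using hw⟩, colLE_nil _, hS⟩
  | cons d S ih =>
    obtain ⟨⟨hd0, hd, hdm⟩, hdS, hS⟩ := isTableau_cons_iff.mp hS
    rw [colInsert_cons]
    split_ifs with hq
    · have hup := le_getD_insertPos hq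
      have hset := isChain_set_of_lt_of_le hd (fun j hj => getD_lt_of_lt_insertPos hj) hup
      have hx : d.getD (insertPos w d) 0 ∈ d := by rw [getD_eq_getElem _ _ hq]; exact getElem_mem hq
      refine isTableau_cons_iff.mpr
        ⟨⟨by simpa using hd0, hset, fun y hy => ?_⟩, ?_, ih hS (hdm _ hx)⟩
      · rcases mem_or_eq_of_mem_set hy with hy | rfl
        exacts [hdm y hy, hw]
      · refine colLE_headD_colInsert hset (hdS.set_left hup) (by simpa using hq) ?_
          (insertPos_le_of_colLE hdS le_rfl)
        rw [getD_set_of_lt hq, if_pos rfl]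
        exact hup
    · have hlt : ∀ y ∈ d, y < w :=
        insertPos_eq_length_iff.mp (le_antisymm insertPos_le_length (not_lt.mp hq))
      refine isTableau_cons_iff.mpr ⟨⟨by simp, ?_, ?_⟩, hdS.append_left _, hS⟩
      · exact isChain_append.mpr ⟨hd, isChain_singleton _,
          fun y hy z hz => Option.mem_some_iff.mp hz ▸ hlt y (mem_of_mem_getLast? hy)⟩
      · intro y hy
        rcases mem_append.mp hy with hy | hy
        exacts [hdm y hy, mem_singleton.mp hy ▸ hw]

lemma isTableau_cons_colInsert {m : ℕ} {c : List ℕ} {S : List (List ℕ)} (h : IsTableau m (c :: S))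
    {w : ℕ} (hw : w ∈ c) : IsTableau m (c :: colInsert w S) := by
  obtain ⟨hc, hcS, hS⟩ := isTableau_cons_iff.mp h
  obtain ⟨i, hi, hiw⟩ := getElem_of_mem hw
  rw [← getD_eq_getElem _ 0 hi] at hiw
  exact isTableau_cons_iff.mpr ⟨hc, colLE_headD_colInsert hc.2.1 hcS hi hiw.le
    (insertPos_le_of_colLE hcS hiw.ge), isTableau_colInsert hS (hc.2.2 w hw)⟩

/-- The row (1-based) of the box that `colInsert w` adds to the shape of `S`. -/
def newBoxRow (w : ℕ) : List (List ℕ) → ℕ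
  | [] => 1
  | d :: S =>
    if insertPos w d < d.length then newBoxRow (d.getD (insertPos w d) 0) S else d.length + 1

def newBoxRows : List ℕ → List (List ℕ) → List ℕ
  | [], _ => []
  | w :: b, S => newBoxRow w S :: newBoxRows b (colInsert w S)

lemma rowLen_cons (c : List ℕ) (T : List (List ℕ)) (i : ℕ) :
    rowLen (c :: T) i = rowLen T i + if i ≤ c.length then 1 else 0 := by
  simp [rowLen, countP_cons]

lemma rowLen_colInsert (w : ℕ) (S : List (List ℕ)) {i : ℕ} (hi : 1 ≤ i) :
    rowLen (colInsert w S) i = rowLen S i + if i = newBoxRow w S then 1 else 0 := by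
  induction S generalizing w with
  | nil =>
    rw [colInsert, newBoxRow, rowLen_cons, length_singleton]
    split_ifs <;> omega
  | cons d S ih =>
    rw [colInsert_cons, newBoxRow]
    split_ifs <;> simp only [rowLen_cons, ih, length_set, length_append, length_singleton] <;>
      split_ifs <;> omega

@[simp] lemma insertCol_nil (S : List (List ℕ)) : insertCol [] S = S := rfl

lemma insertCol_cons (w : ℕ) (b : List ℕ) (S : List (List ℕ)) :
    insertCol (w :: b) S = insertCol b (colInsert w S) := rfl

lemma rowLen_insertCol (b : List ℕ) (S : List (List ℕ)) {i : ℕ} (hi : 1 ≤ i) :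
    rowLen (insertCol b S) i = rowLen S i + (newBoxRows b S).count i := by
  induction b generalizing S with
  | nil => simp [newBoxRows]
  | cons w b ih =>
    rw [insertCol_cons, ih, rowLen_colInsert w S hi, newBoxRows, count_cons]
    simp only [beq_iff_eq, eq_comm (a := i)]
    omega

lemma length_newBoxRows (b : List ℕ) (S : List (List ℕ)) : (newBoxRows b S).length = b.length := by
  induction b generalizing S with
  | nil => rfl
  | cons w b ih => simp [newBoxRows, ih]

lemma one_le_newBoxRow (w : ℕ) (S : List (List ℕ)) : 1 ≤ newBoxRow w S := by
  induction S generalizing w with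
  | nil => simp [newBoxRow]
  | cons d S ih => rw [newBoxRow]; split_ifs; exacts [ih _, by omega]

lemma newBoxRow_le_insertPos_headD {m : ℕ} {S : List (List ℕ)} (hS : IsTableau m S) (w : ℕ) :
    newBoxRow w S ≤ insertPos w (S.headD []) + 1 := by
  induction S generalizing w with
  | nil => simp [newBoxRow]
  | cons d S ih =>
    obtain ⟨-, hdS, hS⟩ := isTableau_cons_iff.mp hS
    rw [newBoxRow, headD_cons]
    split_ifs with hq
    · exact (ih hS _).trans (Nat.succ_le_succ (insertPos_le_of_colLE hdS le_rfl))
    · omega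

lemma newBoxRow_le_length {m : ℕ} {c : List ℕ} {S : List (List ℕ)} (h : IsTableau m (c :: S))
    {w : ℕ} (hw : w ∈ c) : newBoxRow w S ≤ c.length := by
  obtain ⟨-, hcS, hS⟩ := isTableau_cons_iff.mp h
  obtain ⟨i, hi, hiw⟩ := getElem_of_mem hw
  rw [← getD_eq_getElem _ 0 hi] at hiw
  have := insertPos_le_of_colLE hcS hiw.ge
  have := newBoxRow_le_insertPos_headD hS w
  omega

lemma newBoxRow_lt_newBoxRow_colInsert {m : ℕ} {S : List (List ℕ)} (hS : IsTableau m S)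
    {w w' : ℕ} (hww : w < w') : newBoxRow w S < newBoxRow w' (colInsert w S) := by
  induction S generalizing w w' with
  | nil => simp [colInsert, newBoxRow, insertPos, hww]
  | cons d S ih =>
    obtain ⟨⟨-, hd, -⟩, hdS, hS⟩ := isTableau_cons_iff.mp hS
    rw [colInsert_cons, newBoxRow]
    split_ifs with hq
    · set q := insertPos w d
      have hq' : q + 1 ≤ insertPos w' (d.set q w) := by
        refine le_insertPos (by simpa using hq) fun j hj => ?_
        rw [getD_set_of_lt (by omega)]
        split_ifs with hqj
        · exact hww
        · exact (getD_lt_of_lt_insertPos (show j < q by omega)).trans hww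
      rw [newBoxRow]
      split_ifs with hq''
      · apply ih hS
        rw [getD_set_of_lt (by simpa using hq''), if_neg (by omega)]
        exact getD_lt_getD_of_isChain hd (by omega) (by simpa using hq'')
      · have := newBoxRow_le_insertPos_headD hS (d.getD q 0)
        have := insertPos_le_of_colLE hdS (le_refl (d.getD q 0))
        simp only [length_set]
        omega
    · have hlt : ∀ y ∈ d, y < w :=
        insertPos_eq_length_iff.mp (le_antisymm insertPos_le_length (not_lt.mp hq))
      have hpos : insertPos w' (d ++ [w]) = (d ++ [w]).length :=
        insertPos_eq_length_iff.mpr fun y hy => by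
          rcases mem_append.mp hy with hy | hy
          exacts [(hlt y hy).trans hww, mem_singleton.mp hy ▸ hww]
      rw [newBoxRow, if_neg (by omega)]
      simp

lemma isChain_newBoxRows {m : ℕ} {c : List ℕ} {S : List (List ℕ)} {b : List ℕ}
    (h : IsTableau m (c :: S)) (hb : b <+ c) : (newBoxRows b S).IsChain (· < ·) := by
  induction b generalizing S with
  | nil => exact isChain_nil
  | cons w b ih =>
    have hwb : (w :: b).Pairwise (· < ·) :=
      (isChain_iff_pairwise.mp (isTableau_cons_iff.mp h).1.2.1).sublist hb
    have hS := isTableau_cons_colInsert h (hb.subset mem_cons_self)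
    rw [newBoxRows, isChain_cons]
    refine ⟨fun r hr => ?_, ih hS (sublist_of_cons_sublist hb)⟩
    rcases b with _ | ⟨w', b⟩
    · simp [newBoxRows] at hr
    · simp only [newBoxRows, head?_cons, Option.mem_some_iff] at hr
      exact hr ▸ newBoxRow_lt_newBoxRow_colInsert (isTableau_cons_iff.mp h).2.2
        (rel_of_pairwise_cons hwb mem_cons_self)

lemma mem_Icc_of_mem_newBoxRows {m : ℕ} {c : List ℕ} {S : List (List ℕ)} {b : List ℕ}
    (h : IsTableau m (c :: S)) (hb : b <+ c) :
    ∀ r ∈ newBoxRows b S, r ∈ Finset.Icc 1 c.length := by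
  induction b generalizing S with
  | nil => simp [newBoxRows]
  | cons w b ih =>
    have hw : w ∈ c := hb.subset mem_cons_self
    intro r hr
    rcases mem_cons.mp hr with rfl | hr
    · exact Finset.mem_Icc.mpr ⟨one_le_newBoxRow w S, newBoxRow_le_length h hw⟩
    · exact ih (isTableau_cons_colInsert h hw) (sublist_of_cons_sublist hb) r hr

theorem rowLen_insertCol_of_sublist {m : ℕ} {c : List ℕ} {S : List (List ℕ)} {b : List ℕ}
    (h : IsTableau m (c :: S)) (hb : b <+ c) :
    ∃ R : Finset ℕ, R ⊆ Finset.Icc 1 c.length ∧ R.card = b.length ∧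
      ∀ i, 1 ≤ i → rowLen (insertCol b S) i = rowLen S i + if i ∈ R then 1 else 0 := by
  have hnodup : (newBoxRows b S).Nodup :=
    (isChain_iff_pairwise.mp (isChain_newBoxRows h hb)).imp (fun h => h.ne)
  refine ⟨(newBoxRows b S).toFinset, fun r hr => ?_, ?_, fun i hi => ?_⟩
  · exact mem_Icc_of_mem_newBoxRows h hb r (mem_toFinset.mp hr)
  · rw [toFinset_card_of_nodup hnodup, length_newBoxRows]
  · rw [rowLen_insertCol b S hi]
    split_ifs with hiR
    · rw [count_eq_one_of_mem hnodup (mem_toFinset.mp hiR)]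
    · rw [count_eq_zero_of_not_mem (mt mem_toFinset.mpr hiR)]

lemma ColLE.of_cons_cons {a b : ℕ} {s t : List ℕ} (h : ColLE (a :: s) (b :: t)) : ColLE s t :=
  ⟨by simpa using h.1, fun r hr => by simpa using h.2 (r + 1) (by simpa using hr)⟩

/-- Each entry of `s` bumps the entry of `t` in the same row on into `U`. -/
lemma insertCol_append_of_colLE {s t : List ℕ} (hs : s.IsChain (· < ·)) (hst : ColLE s t)
    {pfx : List ℕ} (hpfx : ∀ y ∈ pfx, ∀ z ∈ s, y < z) (U : List (List ℕ)) :
    insertCol s ((pfx ++ t) :: U) = (pfx ++ s) :: insertCol t U := by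
  induction s generalizing pfx t U with
  | nil =>
    obtain rfl : t = [] := length_eq_zero_iff.mp (Nat.le_zero.mp hst.1)
    rfl
  | cons s₀ s ih =>
    have hs₀ : ∀ z ∈ s, s₀ < z := fun z => rel_of_pairwise_cons (isChain_iff_pairwise.mp hs)
    have hpfx₀ : ∀ y ∈ pfx, y < s₀ := fun y hy => hpfx y hy s₀ mem_cons_self
    have hpfx' : ∀ y ∈ pfx ++ [s₀], ∀ z ∈ s, y < z := by
      intro y hy z hz
      rcases mem_append.mp hy with hy | hy
      · exact hpfx y hy z (mem_cons_of_mem _ hz)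
      · exact mem_singleton.mp hy ▸ hs₀ z hz
    rcases t with _ | ⟨t₀, t⟩
    · have hpos : insertPos s₀ pfx = pfx.length := insertPos_eq_length_iff.mpr hpfx₀
      have := ih hs.tail (colLE_nil s) hpfx' U
      rw [append_nil, insertCol_cons, colInsert_cons, hpos, if_neg (lt_irrefl _)]
      simpa using this
    · have hpos : insertPos s₀ (pfx ++ t₀ :: t) = pfx.length :=
        insertPos_append_of_lt hpfx₀ (by simpa using hst.2 0 (by simp))
      have hset : (pfx ++ t₀ :: t).set pfx.length s₀ = (pfx ++ [s₀]) ++ t := by simp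
      have hget : (pfx ++ t₀ :: t).getD pfx.length 0 = t₀ := by simp
      rw [insertCol_cons, colInsert_cons, hpos, if_pos (by simp), hset, hget,
        ih hs.tail hst.of_cons_cons hpfx' (colInsert t₀ U)]
      simp [insertCol_cons]

lemma insertCol_self {m : ℕ} {c : List ℕ} {S : List (List ℕ)} (h : IsTableau m (c :: S)) :
    insertCol c S = c :: S := by
  induction S generalizing c with
  | nil =>
    obtain ⟨⟨hc0, hc, -⟩, -, -⟩ := isTableau_cons_iff.mp h
    obtain ⟨c₀, c, rfl⟩ := exists_cons_of_ne_nil hc0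
    have := insertCol_append_of_colLE hc.tail (colLE_nil c) (pfx := [c₀])
      (by simpa using fun z => rel_of_pairwise_cons (isChain_iff_pairwise.mp hc)) []
    simpa [insertCol_cons, colInsert] using this
  | cons d S ih =>
    obtain ⟨⟨-, hc, -⟩, hcd, hS⟩ := isTableau_cons_iff.mp h
    simpa [ih hS] using insertCol_append_of_colLE hc hcd (pfx := []) (by simp) S

lemma redSeq_sublist (c : List ℕ) : redSeq c <+ c := filter_sublist

theorem stmt17_general (n : ℕ) (lam : List ℕ)
    (T : List (List ℕ)) (hT : IsTableau (2 * n) T) (hsh : hasShape T lam) :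
    ((∀ i, 1 ≤ i → rowLen (suc T) i ≤ part lam i) ∧
      (∀ i, 1 ≤ i → part lam i ≤ rowLen (suc T) i + 1)) ∧
    ((∀ i, 1 ≤ i → rowLen (suc T) i = part lam i) ↔ suc T = T) := by
  rcases T with _ | ⟨c, S⟩
  · exact ⟨⟨fun i hi => (hsh i hi).le, fun i hi => (hsh i hi).ge.trans (Nat.le_succ _)⟩,
      iff_of_true hsh rfl⟩
  obtain ⟨R, hRc, hRcard, hR⟩ := rowLen_insertCol_of_sublist hT (redSeq_sublist c)
  have hpart : ∀ i, 1 ≤ i → part lam i = rowLen S i + if i ≤ c.length then 1 else 0 :=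
    fun i hi => by rw [← hsh i hi, rowLen_cons]
  have hrow : ∀ i, 1 ≤ i → rowLen (suc (c :: S)) i = rowLen S i + if i ∈ R then 1 else 0 :=
    fun i hi => by rw [suc, hR i hi]
  have hRle : ∀ i ∈ R, i ≤ c.length := fun i hi => (Finset.mem_Icc.mp (hRc hi)).2
  refine ⟨⟨fun i hi => ?_, fun i hi => ?_⟩, fun heq => ?_, fun heq i hi => heq.symm ▸ hsh i hi⟩
  · rw [hrow i hi, hpart i hi]
    by_cases hiR : i ∈ R
    · simp [hiR, hRle i hiR]
    · simp [hiR]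
  · rw [hrow i hi, hpart i hi]
    split_ifs <;> omega
  · have hR' : R = Finset.Icc 1 c.length := Finset.Subset.antisymm hRc fun i hi => by
      obtain ⟨hi1, hic⟩ := Finset.mem_Icc.mp hi
      have := heq i hi1
      rw [hrow i hi1, hpart i hi1, if_pos hic] at this
      by_contra hiR
      rw [if_neg hiR] at this
      omega
    have hred : redSeq c = c :=
      (redSeq_sublist c).eq_of_length (by rw [← hRcard, hR', Nat.card_Icc]; omega)
    rw [suc, hred, insertCol_self hT]

theorem stmt17 (n : ℕ) (hn : 1 ≤ n) (lam : List ℕ)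
    (hlam : IsPartition lam) (hlen : lam.length ≤ 2 * n)
    (T : List (List ℕ)) (hT : IsTableau (2 * n) T) (hsh : hasShape T lam) :
    ((∀ i, 1 ≤ i → rowLen (suc T) i ≤ part lam i) ∧
      (∀ i, 1 ≤ i → part lam i ≤ rowLen (suc T) i + 1)) ∧
    ((∀ i, 1 ≤ i → rowLen (suc T) i = part lam i) ↔ suc T = T) :=
  stmt17_general n lam T hT hsh
end
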